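/- Let D be a digraph and let T be a normal spanning arborescence of D rooted at r. Then for every solid ray R of D there is exactly one ray of T starting at r (an injective map r' : ℕ → V with r' 0 = r and T (r' n) (r' (n+1)) for all n) that is equivalent to R in D. -/

import Mathlib

/-- Mutual reachability in `D − X`: `u` and `v` lie in the same strong component
of the restriction of `E` to the complement of `X`. -/
def SameComp {V : Type*} (E : V → V → Prop) (X : Set V) (u v : V) : Prop :=
  Relation.ReflTransGen (fun a b => a ∉ X ∧ b ∉ X ∧ E a b) u v ∧
  Relation.ReflTransGen (fun a b => a ∉ X ∧ b ∉ X ∧ E a b) v u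

/-- A digraph is solid if deleting any finite vertex set leaves only finitely many
strong components. -/
def IsSolid {V : Type*} (E : V → V → Prop) : Prop :=
  ∀ X : Set V, X.Finite →
    {C : Set V | ∃ v, v ∉ X ∧ C = {u | u ∉ X ∧ SameComp E X u v}}.Finite

/-- A ray in a digraph. -/
def IsRay {V : Type*} (E : V → V → Prop) (r : ℕ → V) : Prop :=
  Function.Injective r ∧ ∀ n : ℕ, E (r n) (r (n + 1))

/-- A solid ray: it has a tail in a single strong component of `D − X`
for every finite `X`. -/
def IsSolidRay {V : Type*} (E : V → V → Prop) (r : ℕ → V) : Prop :=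
  IsRay E r ∧ ∀ X : Set V, X.Finite →
    ∃ N : ℕ, (∀ n : ℕ, N ≤ n → r n ∉ X) ∧
      (∀ m n : ℕ, N ≤ m → N ≤ n → SameComp E X (r m) (r n))

/-- Two rays are equivalent if for every finite `X` they have tails in
the same strong component of `D − X`. -/
def RayEquiv {V : Type*} (E : V → V → Prop) (r r' : ℕ → V) : Prop :=
  ∀ X : Set V, X.Finite →
    ∃ N M : ℕ, (∀ n : ℕ, N ≤ n → r n ∉ X) ∧ (∀ m : ℕ, M ≤ m → r' m ∉ X) ∧
      (∀ n m : ℕ, N ≤ n → M ≤ m → SameComp E X (r n) (r' m))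

/-- `T` is a spanning arborescence of the digraph `E` rooted at `root`. -/
def IsSpanningArborescence {V : Type*} (E T : V → V → Prop) (root : V) : Prop :=
  (∀ u v : V, T u v → E u v) ∧
  (∀ u : V, ¬ T u root) ∧
  (∀ v : V, v ≠ root → ∃! u : V, T u v) ∧
  (∀ v : V, Relation.ReflTransGen T root v)

/-- The normal assistant of `T` in `E`: the tree edges of `T` together with an
edge `(v, w)` for every two tree-incomparable vertices `v, w` such that `E` has
an edge from the up-closure of `v` to the up-closure of `w`. -/
def NormalAssistant {V : Type*} (E T : V → V → Prop) : V → V → Prop := fun v w =>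
  T v w ∨
    (¬ Relation.ReflTransGen T v w ∧ ¬ Relation.ReflTransGen T w v ∧
      ∃ v' w' : V, Relation.ReflTransGen T v v' ∧ Relation.ReflTransGen T w w' ∧ E v' w')

/-- `T` is normal in `E` if its normal assistant is acyclic. -/
def IsNormal {V : Type*} (E T : V → V → Prop) : Prop :=
  Irreflexive (Relation.TransGen (NormalAssistant E T))

/-!
Write `≤` for the tree order. For a down-closed set `Y`, all vertices of a strong component `C`
of `D - Y` leave `Y` along the tree at the same vertex, because distinct exit points along a closed
walk would form a cycle of the normal assistant. So `C` has lower bounds outside `Y`, and the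
largest of them lies in `C`: it is the least vertex of `C`. Hence for finite down-closed `Y` the
tail of the solid ray `R` lies above the least vertex of its component in `D - Y`. Applied to
`Y = ⌊v⌋` for a vertex `v` below the tail of `R`, this gives a child of `v` below the tail of `R`;
iterating from the root gives a normal ray, which is equivalent to `R`. Conversely every normal ray
equivalent to `R` has all its vertices below the tail of `R`, and such a ray is unique since
tree paths from the root are determined by their vertices.
-/

open Relation Filter

lemma exists_seq_of_forall_exists {α : Type*} {r : α → α → Prop} {P : α → Prop} {a : α}
    (ha : P a) (h : ∀ x, P x → ∃ y, r x y ∧ P y) :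
    ∃ f : ℕ → α, f 0 = a ∧ (∀ n, r (f n) (f (n + 1))) ∧ ∀ n, P (f n) := by
  choose! g hgr hgP using h
  have hP : ∀ n, P (g^[n] a) := fun n => by
    induction n with
    | zero => exact ha
    | succ n ih => rw [Function.iterate_succ_apply']; exact hgP _ ih
  refine ⟨fun n => g^[n] a, rfl, fun n => ?_, hP⟩
  simpa only [Function.iterate_succ_apply'] using hgr _ (hP n)

section Normal

variable {V : Type*} {E T : V → V → Prop}

lemma IsNormal.eq_of_reflTransGen (h_norm : IsNormal E T) {a b : V}
    (hab : ReflTransGen (NormalAssistant E T) a b) (hba : ReflTransGen (NormalAssistant E T) b a) :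
    a = b := by
  rcases reflTransGen_iff_eq_or_transGen.mp hab with h | h
  · exact h.symm
  · exact absurd (h.trans_left hba) (h_norm a)

lemma IsNormal.le_antisymm (h_norm : IsNormal E T) {a b : V}
    (hab : ReflTransGen T a b) (hba : ReflTransGen T b a) : a = b :=
  h_norm.eq_of_reflTransGen (ReflTransGen.mono (fun _ _ => Or.inl) _ _ hab)
    (ReflTransGen.mono (fun _ _ => Or.inl) _ _ hba)

end Normal

section Tree

variable {V : Type*} {T : V → V → Prop} {root : V}

lemma eq_root_of_le_root (hroot : ∀ u, ¬ T u root) {u : V} (h : ReflTransGen T u root) :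
    u = root := by
  rcases h.cases_tail with h | ⟨c, -, hc⟩
  · exact h.symm
  · exact absurd hc (hroot c)

lemma eq_or_le_parent_of_le (hroot : ∀ u, ¬ T u root) (huniq : ∀ v, v ≠ root → ∃! u, T u v)
    {p v u : V} (hp : T p v) (h : ReflTransGen T u v) : u = v ∨ ReflTransGen T u p := by
  rcases h.cases_tail with h | ⟨c, hc, hcv⟩
  · exact Or.inl h.symm
  · have hv : v ≠ root := fun hv => hroot p (hv ▸ hp)
    exact Or.inr ((huniq v hv).unique hcv hp ▸ hc)

lemma finite_setOf_le (hroot : ∀ u, ¬ T u root) (huniq : ∀ v, v ≠ root → ∃! u, T u v)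
    {v : V} (hv : ReflTransGen T root v) : {u | ReflTransGen T u v}.Finite := by
  induction hv with
  | refl => exact (Set.finite_singleton root).subset fun u hu => eq_root_of_le_root hroot hu
  | @tail b c _ hbc ih =>
    exact (ih.insert c).subset fun u hu => eq_or_le_parent_of_le hroot huniq hbc hu

lemma le_total_of_le (hroot : ∀ u, ¬ T u root) (huniq : ∀ v, v ≠ root → ∃! u, T u v)
    {u w v : V} (hv : ReflTransGen T root v) (hu : ReflTransGen T u v) (hw : ReflTransGen T w v) :
    ReflTransGen T u w ∨ ReflTransGen T w u := by
  induction hv generalizing u w with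
  | refl =>
    rw [eq_root_of_le_root hroot hu, eq_root_of_le_root hroot hw]
    exact Or.inl .refl
  | @tail b c _ hbc ih =>
    rcases eq_or_le_parent_of_le hroot huniq hbc hu with huc | hub
    · exact Or.inr (huc ▸ hw)
    rcases eq_or_le_parent_of_le hroot huniq hbc hw with hwc | hwb
    · exact Or.inl (hwc ▸ hub.tail hbc)
    · exact ih hub hwb

def IsDownClosed (T : V → V → Prop) (Y : Set V) : Prop :=
  ∀ u w, ReflTransGen T u w → w ∈ Y → u ∈ Y

/-- For down-closed `Y`, the tree path from `root` to `v` leaves `Y` at `a`. -/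
def IsLeastOutside (T : V → V → Prop) (Y : Set V) (v a : V) : Prop :=
  ReflTransGen T a v ∧ a ∉ Y ∧ ∀ u, ReflTransGen T u a → u ∉ Y → u = a

lemma exists_isLeastOutside (hroot : ∀ u, ¬ T u root) (huniq : ∀ v, v ≠ root → ∃! u, T u v)
    {Y : Set V} (hY : IsDownClosed T Y) {v : V} (hv : ReflTransGen T root v) (hvY : v ∉ Y) :
    ∃ a, IsLeastOutside T Y v a := by
  induction hv with
  | refl => exact ⟨root, .refl, hvY, fun u hu _ => eq_root_of_le_root hroot hu⟩
  | @tail b c _ hbc ih =>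
    by_cases hb : b ∈ Y
    · refine ⟨c, .refl, hvY, fun u hu huY => ?_⟩
      exact (eq_or_le_parent_of_le hroot huniq hbc hu).resolve_right fun h => huY (hY u b h hb)
    · obtain ⟨a, hac, haY, hmin⟩ := ih hb
      exact ⟨a, hac.tail hbc, haY, hmin⟩

lemma IsLeastOutside.unique (hroot : ∀ u, ¬ T u root) (huniq : ∀ v, v ≠ root → ∃! u, T u v)
    {Y : Set V} {v a b : V} (hv : ReflTransGen T root v)
    (ha : IsLeastOutside T Y v a) (hb : IsLeastOutside T Y v b) : a = b := by
  rcases le_total_of_le hroot huniq hv ha.1 hb.1 with h | h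
  · exact hb.2.2 a h ha.2.1
  · exact (ha.2.2 b h hb.2.1).symm

end Tree

section Components

variable {V : Type*} {E : V → V → Prop}

def DeleteVerts (E : V → V → Prop) (X : Set V) : V → V → Prop := fun a b => a ∉ X ∧ b ∉ X ∧ E a b

lemma SameComp.symm {X : Set V} {u v : V} (h : SameComp E X u v) : SameComp E X v u :=
  ⟨h.2, h.1⟩

lemma SameComp.trans {X : Set V} {u v w : V} (huv : SameComp E X u v) (hvw : SameComp E X v w) :
    SameComp E X u w :=
  ⟨huv.1.trans hvw.1, hvw.2.trans huv.2⟩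

lemma reflTransGen_deleteVerts_mono {X Y : Set V} (hXY : X ⊆ Y) {u v : V}
    (h : ReflTransGen (DeleteVerts E Y) u v) : ReflTransGen (DeleteVerts E X) u v :=
  ReflTransGen.mono (fun _ _ hab => ⟨fun ha => hab.1 (hXY ha), fun hb => hab.2.1 (hXY hb), hab.2.2⟩)
    _ _ h

lemma SameComp.mono {X Y : Set V} (hXY : X ⊆ Y) {u v : V} (h : SameComp E Y u v) :
    SameComp E X u v :=
  ⟨reflTransGen_deleteVerts_mono hXY h.1, reflTransGen_deleteVerts_mono hXY h.2⟩

lemma not_mem_of_reflTransGen_deleteVerts {X : Set V} {u v : V}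
    (h : ReflTransGen (DeleteVerts E X) u v) (hu : u ∉ X) : v ∉ X := by
  rcases h.cases_tail with rfl | ⟨c, -, hcv⟩
  · exact hu
  · exact hcv.2.1

lemma reflTransGen_deleteVerts_of_sameComp {Y Z : Set V} {u v : V}
    (huv : ReflTransGen (DeleteVerts E Y) u v) (hvu : ReflTransGen (DeleteVerts E Y) v u)
    (hZ : ∀ w, SameComp E Y w u → w ∉ Z) : ReflTransGen (DeleteVerts E Z) u v := by
  induction huv with
  | refl => exact .refl
  | @tail c d huc hcd ih =>
    have hcu : ReflTransGen (DeleteVerts E Y) c u := hvu.head hcd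
    exact (ih hcu).tail ⟨hZ c ⟨hcu, huc⟩, hZ d ⟨hvu, huc.tail hcd⟩, hcd.2.2⟩

lemma SameComp.of_forall_not_mem {Y Z : Set V} {u v : V} (h : SameComp E Y u v)
    (hZ : ∀ w, SameComp E Y w u → w ∉ Z) : SameComp E Z u v :=
  ⟨reflTransGen_deleteVerts_of_sameComp h.1 h.2 hZ,
    reflTransGen_deleteVerts_of_sameComp h.2 h.1 fun w hw => hZ w (hw.trans h.symm)⟩

end Components

section NormalTree

variable {V : Type*} {E T : V → V → Prop} {root : V}

lemma reflTransGen_deleteVerts_of_le (hsub : ∀ u v, T u v → E u v) {X : Set V} {u v : V}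
    (huv : ReflTransGen T u v) (hX : ∀ w, ReflTransGen T u w → w ∉ X) :
    ReflTransGen (DeleteVerts E X) u v := by
  induction huv with
  | refl => exact .refl
  | @tail c d huc hcd ih => exact ih.tail ⟨hX c huc, hX d (huc.tail hcd), hsub c d hcd⟩

lemma IsLeastOutside.reflTransGen_normalAssistant {Y : Set V} {c d a b : V}
    (ha : IsLeastOutside T Y c a) (hb : IsLeastOutside T Y d b) (hcd : E c d) :
    ReflTransGen (NormalAssistant E T) a b := by
  by_cases hab : a = b
  · exact hab ▸ .refl
  · exact .single <| Or.inr ⟨fun h => hab (hb.2.2 a h ha.2.1), fun h => hab (ha.2.2 b h hb.2.1).symm,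
      c, d, ha.1, hb.1, hcd⟩

lemma reflTransGen_normalAssistant_of_reflTransGen_deleteVerts (hroot : ∀ u, ¬ T u root)
    (huniq : ∀ v, v ≠ root → ∃! u, T u v) (hreach : ∀ v, ReflTransGen T root v)
    {Y : Set V} (hY : IsDownClosed T Y) {u v a b : V} (h : ReflTransGen (DeleteVerts E Y) u v)
    (ha : IsLeastOutside T Y u a) (hb : IsLeastOutside T Y v b) :
    ReflTransGen (NormalAssistant E T) a b := by
  induction h generalizing b with
  | refl => exact ha.unique hroot huniq (hreach u) hb ▸ .refl
  | @tail c d _ hcd ih =>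
    obtain ⟨m, hm⟩ := exists_isLeastOutside hroot huniq hY (hreach c) hcd.1
    exact (ih hm).trans (hm.reflTransGen_normalAssistant hb hcd.2.2)

lemma IsLeastOutside.eq_of_sameComp (hroot : ∀ u, ¬ T u root)
    (huniq : ∀ v, v ≠ root → ∃! u, T u v) (hreach : ∀ v, ReflTransGen T root v)
    (h_norm : IsNormal E T) {Y : Set V} (hY : IsDownClosed T Y) {u v a b : V}
    (huv : SameComp E Y u v) (ha : IsLeastOutside T Y u a) (hb : IsLeastOutside T Y v b) :
    a = b :=
  -- otherwise the exit points from `Y` along a closed walk through `u` and `v` form a cycle of the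
  -- normal assistant
  h_norm.eq_of_reflTransGen
    (reflTransGen_normalAssistant_of_reflTransGen_deleteVerts hroot huniq hreach hY huv.1 ha hb)
    (reflTransGen_normalAssistant_of_reflTransGen_deleteVerts hroot huniq hreach hY huv.2 hb ha)

lemma IsLeastOutside.le_of_sameComp (hroot : ∀ u, ¬ T u root)
    (huniq : ∀ v, v ≠ root → ∃! u, T u v) (hreach : ∀ v, ReflTransGen T root v)
    (h_norm : IsNormal E T) {Y : Set V} (hY : IsDownClosed T Y) {t u b : V}
    (hb : IsLeastOutside T Y t b) (hut : SameComp E Y u t) : ReflTransGen T b u := by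
  have htY : t ∉ Y := fun ht => hb.2.1 (hY b t hb.1 ht)
  obtain ⟨a, ha⟩ := exists_isLeastOutside hroot huniq hY (hreach u)
    (not_mem_of_reflTransGen_deleteVerts hut.2 htY)
  exact ha.eq_of_sameComp hroot huniq hreach h_norm hY hut hb ▸ ha.1

lemma exists_le_of_sameComp (hroot : ∀ u, ¬ T u root) (huniq : ∀ v, v ≠ root → ∃! u, T u v)
    (hreach : ∀ v, ReflTransGen T root v) (h_norm : IsNormal E T) {Y : Set V}
    (hY : IsDownClosed T Y) {t : V} (ht : t ∉ Y) :
    ∃ a, SameComp E Y a t ∧ ∀ u, SameComp E Y u t → ReflTransGen T a u := by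
  set LB : Set V := {w | w ∉ Y ∧ ∀ u, SameComp E Y u t → ReflTransGen T w u}
  have hLB : LB ⊆ {w | ReflTransGen T w t} := fun w hw => hw.2 t ⟨.refl, .refl⟩
  obtain ⟨g, hg⟩ := exists_isLeastOutside hroot huniq hY (hreach t) ht
  have hgLB : g ∈ LB := ⟨hg.2.1, fun u hu => hg.le_of_sameComp hroot huniq hreach h_norm hY hu⟩
  obtain ⟨a, haLB, hamax⟩ := ((finite_setOf_le hroot huniq (hreach t)).subset hLB).exists_maximalFor
    (fun w => {u | ReflTransGen T u w}) LB ⟨g, hgLB⟩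
  have hmax : ∀ b ∈ LB, ReflTransGen T b a := fun b hb => by
    rcases le_total_of_le hroot huniq (hreach t) (hLB haLB) (hLB hb) with h | h
    · exact hamax hb (fun u hu => ReflTransGen.trans hu h) ReflTransGen.refl
    · exact h
  refine ⟨a, ?_, haLB.2⟩
  by_contra hat
  -- `a` is the largest lower bound of the component, so the component misses `Z`; yet its exit
  -- point from `Z` would be a larger lower bound.
  set Z : Set V := Y ∪ {w | ReflTransGen T w a}
  have hZ : IsDownClosed T Z := by
    rintro u w huw (hw | hw)
    · exact Or.inl (hY u w huw hw)
    · exact Or.inr (huw.trans hw)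
  have hCZ : ∀ u, SameComp E Y u t → u ∉ Z := by
    rintro u hu (huY | hua)
    · exact not_mem_of_reflTransGen_deleteVerts hu.2 ht huY
    · exact hat (h_norm.le_antisymm (haLB.2 u hu) hua ▸ hu)
  obtain ⟨b, hb⟩ := exists_isLeastOutside hroot huniq hZ (hreach t) (hCZ t ⟨.refl, .refl⟩)
  have hbLB : b ∈ LB := ⟨fun h => hb.2.1 (Or.inl h), fun u hu => hb.le_of_sameComp hroot huniq
    hreach h_norm hZ (hu.of_forall_not_mem fun w hw => hCZ w (hw.trans hu))⟩
  exact hb.2.1 (Or.inr (hmax b hbLB))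

end NormalTree

section Paths

variable {V : Type*} {T : V → V → Prop} {root : V}

lemma reflTransGen_of_le {z : ℕ → V} (hz : ∀ n, T (z n) (z (n + 1))) {m n : ℕ} (hmn : m ≤ n) :
    ReflTransGen T (z m) (z n) := by
  induction n, hmn using Nat.le_induction with
  | base => exact .refl
  | succ k _ ih => exact ih.tail (hz k)

lemma exists_eq_of_le_path (hroot : ∀ u, ¬ T u root) (huniq : ∀ v, v ≠ root → ∃! u, T u v)
    {z : ℕ → V} (hz0 : z 0 = root) (hz : ∀ n, T (z n) (z (n + 1))) {u : V} {n : ℕ}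
    (hu : ReflTransGen T u (z n)) : ∃ j ≤ n, u = z j := by
  induction n with
  | zero => exact ⟨0, le_rfl, hz0 ▸ eq_root_of_le_root hroot (hz0 ▸ hu)⟩
  | succ k ih =>
    rcases eq_or_le_parent_of_le hroot huniq (hz k) hu with h | h
    · exact ⟨k + 1, le_rfl, h⟩
    · obtain ⟨j, hj, rfl⟩ := ih h
      exact ⟨j, hj.trans k.le_succ, rfl⟩

/-- The index of a vertex on a tree path from the root is its depth. -/
lemma eq_of_apply_eq_path (hroot : ∀ u, ¬ T u root) (huniq : ∀ v, v ≠ root → ∃! u, T u v)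
    {z y : ℕ → V} (hz0 : z 0 = root) (hz : ∀ n, T (z n) (z (n + 1)))
    (hy0 : y 0 = root) (hy : ∀ n, T (y n) (y (n + 1))) {n j : ℕ} (h : z n = y j) : n = j := by
  induction n generalizing j with
  | zero =>
    cases j with
    | zero => rfl
    | succ j => exact absurd (hy j) (h ▸ hz0 ▸ hroot (y j))
  | succ n ih =>
    cases j with
    | zero => exact absurd (hz n) (h ▸ hy0 ▸ hroot (z n))
    | succ j =>
      have hne : y (j + 1) ≠ root := fun h' => hroot (y j) (h' ▸ hy j)
      rw [ih ((huniq _ hne).unique (h ▸ hz n) (hy j))]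

lemma injective_of_path (hroot : ∀ u, ¬ T u root) (huniq : ∀ v, v ≠ root → ∃! u, T u v)
    {z : ℕ → V} (hz0 : z 0 = root) (hz : ∀ n, T (z n) (z (n + 1))) : Function.Injective z :=
  fun _ _ h => eq_of_apply_eq_path hroot huniq hz0 hz hz0 hz h

end Paths

section SolidRay

variable {V : Type*} {E T : V → V → Prop} {root : V} {R : ℕ → V}

lemma exists_le_eventually_sameComp (hroot : ∀ u, ¬ T u root)
    (huniq : ∀ v, v ≠ root → ∃! u, T u v) (hreach : ∀ v, ReflTransGen T root v)
    (h_norm : IsNormal E T) (hR : IsSolidRay E R) {Y : Set V} (hYf : Y.Finite)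
    (hY : IsDownClosed T Y) :
    ∃ a, a ∉ Y ∧ ∀ᶠ m in atTop, SameComp E Y a (R m) ∧ ReflTransGen T a (R m) := by
  obtain ⟨N, hNY, hN⟩ := hR.2 Y hYf
  obtain ⟨a, haN, hle⟩ := exists_le_of_sameComp hroot huniq hreach h_norm hY (hNY N le_rfl)
  refine ⟨a, not_mem_of_reflTransGen_deleteVerts haN.2 (hNY N le_rfl),
    eventually_atTop.2 ⟨N, fun m hm => ?_⟩⟩
  have ham : SameComp E Y a (R m) := haN.trans (hN N m le_rfl hm)
  exact ⟨ham, hle _ (ham.symm.trans haN)⟩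

lemma exists_child_eventually_le (hroot : ∀ u, ¬ T u root)
    (huniq : ∀ v, v ≠ root → ∃! u, T u v) (hreach : ∀ v, ReflTransGen T root v)
    (h_norm : IsNormal E T) (hR : IsSolidRay E R) {v : V}
    (hv : ∀ᶠ m in atTop, ReflTransGen T v (R m)) :
    ∃ c, T v c ∧ ∀ᶠ m in atTop, ReflTransGen T c (R m) := by
  have hY : IsDownClosed T {u | ReflTransGen T u v} := fun u w huw hw => huw.trans hw
  obtain ⟨a, hav, ha⟩ := exists_le_eventually_sameComp hroot huniq hreach h_norm hR
    (finite_setOf_le hroot huniq (hreach v)) hY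
  obtain ⟨m, hvm, -, ham⟩ := (hv.and ha).exists
  have hva : ReflTransGen T v a := (le_total_of_le hroot huniq (hreach _) hvm ham).resolve_right hav
  rcases hva.cases_head with h | ⟨c, hvc, hca⟩
  · exact absurd (h ▸ .refl) hav
  · exact ⟨c, hvc, ha.mono fun m hm => hca.trans hm.2⟩

lemma exists_eq_of_eventually_le (hroot : ∀ u, ¬ T u root)
    (huniq : ∀ v, v ≠ root → ∃! u, T u v) (hreach : ∀ v, ReflTransGen T root v)
    {z : ℕ → V} (hz0 : z 0 = root) (hz : ∀ n, T (z n) (z (n + 1)))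
    (hzR : ∀ n, ∀ᶠ m in atTop, ReflTransGen T (z n) (R m)) {v : V}
    (hv : ∀ᶠ m in atTop, ReflTransGen T v (R m)) : ∃ k, v = z k := by
  obtain ⟨n, hn⟩ : ∃ n, ¬ ReflTransGen T (z n) v := by
    by_contra! h
    exact (finite_setOf_le hroot huniq (hreach v)).not_infinite
      (Set.infinite_of_injective_forall_mem (injective_of_path hroot huniq hz0 hz) h)
  obtain ⟨m, hvm, hzm⟩ := (hv.and (hzR n)).exists
  obtain ⟨k, -, hk⟩ := exists_eq_of_le_path hroot huniq hz0 hz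
    ((le_total_of_le hroot huniq (hreach _) hvm hzm).resolve_right hn)
  exact ⟨k, hk⟩

lemma rayEquiv_of_eventually_le (hsub : ∀ u v, T u v → E u v) (hroot : ∀ u, ¬ T u root)
    (huniq : ∀ v, v ≠ root → ∃! u, T u v) (hreach : ∀ v, ReflTransGen T root v)
    (h_norm : IsNormal E T) (hR : IsSolidRay E R) {z : ℕ → V} (hz0 : z 0 = root)
    (hz : ∀ n, T (z n) (z (n + 1))) (hzR : ∀ n, ∀ᶠ m in atTop, ReflTransGen T (z n) (R m)) :
    RayEquiv E z R := by
  intro X hXf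
  set Y : Set V := {u | ∃ x ∈ X, ReflTransGen T u x}
  have hYf : Y.Finite := by
    have hY : Y = ⋃ x ∈ X, {u | ReflTransGen T u x} := by ext; simp [Y]
    exact hY ▸ hXf.biUnion fun x _ => finite_setOf_le hroot huniq (hreach x)
  have hY : IsDownClosed T Y := fun u w huw ⟨x, hx, hwx⟩ => ⟨x, hx, huw.trans hwx⟩
  have hXY : X ⊆ Y := fun x hx => ⟨x, hx, .refl⟩
  obtain ⟨a, haY, ha⟩ := exists_le_eventually_sameComp hroot huniq hreach h_norm hR hYf hY
  obtain ⟨k, rfl⟩ := exists_eq_of_eventually_le hroot huniq hreach hz0 hz hzR (ha.mono fun _ h => h.2)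
  have habove : ∀ w, ReflTransGen T (z k) w → w ∉ X := fun w hw hwX => haY ⟨w, hwX, hw⟩
  have hcomp : ∀ n, k ≤ n → SameComp E X (z n) (z k) := by
    intro n hkn
    have hkn : ReflTransGen T (z k) (z n) := reflTransGen_of_le hz hkn
    have hY' : IsDownClosed T (Y ∪ {u | ReflTransGen T u (z n)}) := by
      rintro u w huw (hw | hw)
      · exact Or.inl (hY u w huw hw)
      · exact Or.inr (huw.trans hw)
    obtain ⟨b, hbY', hb⟩ := exists_le_eventually_sameComp hroot huniq hreach h_norm hR
      (hYf.union (finite_setOf_le hroot huniq (hreach (z n)))) hY'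
    obtain ⟨m, ⟨hbm, hbRm⟩, ⟨hkm, -⟩, hnm⟩ := (hb.and (ha.and (hzR n))).exists
    have hnb : ReflTransGen T (z n) b :=
      (le_total_of_le hroot huniq (hreach _) hnm hbRm).resolve_right fun h => hbY' (Or.inr h)
    have hbk : SameComp E X b (z k) :=
      (hbm.mono (hXY.trans Set.subset_union_left)).trans (hkm.mono hXY).symm
    exact ⟨(reflTransGen_deleteVerts_of_le hsub hnb fun w hw => habove w (hkn.trans hw)).trans hbk.1,
      reflTransGen_deleteVerts_of_le hsub hkn habove⟩
  obtain ⟨M, hM⟩ := eventually_atTop.1 ha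
  refine ⟨k, M, fun n hn => habove _ (reflTransGen_of_le hz hn), fun m hm => ?_,
    fun n m hn hm => (hcomp n hn).trans ((hM m hm).1.mono hXY)⟩
  exact not_mem_of_reflTransGen_deleteVerts ((hM m hm).1.mono hXY).1 (habove _ .refl)

lemma eventually_le_of_rayEquiv (hroot : ∀ u, ¬ T u root)
    (huniq : ∀ v, v ≠ root → ∃! u, T u v) (hreach : ∀ v, ReflTransGen T root v)
    (h_norm : IsNormal E T) {z : ℕ → V} (hz0 : z 0 = root) (hz : ∀ n, T (z n) (z (n + 1)))
    (hzR : RayEquiv E z R) (n : ℕ) : ∀ᶠ m in atTop, ReflTransGen T (z n) (R m) := by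
  set Y : Set V := z '' Set.Iio n
  have hY : IsDownClosed T Y := by
    rintro u w huw ⟨i, hi, rfl⟩
    obtain ⟨j, hj, rfl⟩ := exists_eq_of_le_path hroot huniq hz0 hz huw
    exact ⟨j, hj.trans_lt hi, rfl⟩
  obtain ⟨N, M, -, -, hzRY⟩ := hzR Y ((Set.finite_Iio n).image z)
  have hleast : IsLeastOutside T Y (z (max N n)) (z n) := by
    refine ⟨reflTransGen_of_le hz (le_max_right _ _), ?_, fun u hu huY => ?_⟩
    · rintro ⟨i, hi, h⟩
      exact hi.ne (injective_of_path hroot huniq hz0 hz h)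
    · obtain ⟨j, hj, rfl⟩ := exists_eq_of_le_path hroot huniq hz0 hz hu
      exact congrArg z (hj.eq_of_not_lt fun h => huY ⟨j, h, rfl⟩)
  exact eventually_atTop.2 ⟨M, fun m hm =>
    hleast.le_of_sameComp hroot huniq hreach h_norm hY (hzRY _ m (le_max_left _ _) hm).symm⟩

lemma eq_of_forall_eventually_le (hroot : ∀ u, ¬ T u root)
    (huniq : ∀ v, v ≠ root → ∃! u, T u v) (hreach : ∀ v, ReflTransGen T root v)
    {z y : ℕ → V} (hz0 : z 0 = root) (hz : ∀ n, T (z n) (z (n + 1)))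
    (hy0 : y 0 = root) (hy : ∀ n, T (y n) (y (n + 1)))
    (hzR : ∀ n, ∀ᶠ m in atTop, ReflTransGen T (z n) (R m))
    (hyR : ∀ n, ∀ᶠ m in atTop, ReflTransGen T (y n) (R m)) : y = z := by
  funext n
  obtain ⟨k, hk⟩ := exists_eq_of_eventually_le hroot huniq hreach hz0 hz hzR (hyR n)
  exact hk.trans (congrArg z (eq_of_apply_eq_path hroot huniq hy0 hy hz0 hz hk).symm)

end SolidRay

theorem stmt_16_general {V : Type*} (E T : V → V → Prop)
    (root : V)
    (h_arb : IsSpanningArborescence E T root)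
    (h_norm : IsNormal E T)
    (R : ℕ → V) (hR : IsSolidRay E R) :
    ∃! r' : ℕ → V,
      (Function.Injective r' ∧ r' 0 = root ∧ (∀ n : ℕ, T (r' n) (r' (n + 1)))) ∧
      RayEquiv E r' R := by
  obtain ⟨hsub, hroot, huniq, hreach⟩ := h_arb
  obtain ⟨z, hz0, hz, hzR⟩ := exists_seq_of_forall_exists (r := T)
    (P := fun v => ∀ᶠ m in atTop, ReflTransGen T v (R m)) (a := root)
    (Eventually.of_forall fun m => hreach (R m))
    fun v hv => exists_child_eventually_le hroot huniq hreach h_norm hR hv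
  refine ⟨z, ⟨⟨injective_of_path hroot huniq hz0 hz, hz0, hz⟩,
    rayEquiv_of_eventually_le hsub hroot huniq hreach h_norm hR hz0 hz hzR⟩, ?_⟩
  rintro y ⟨⟨-, hy0, hy⟩, hyR⟩
  exact eq_of_forall_eventually_le hroot huniq hreach hz0 hz hy0 hy hzR
    (eventually_le_of_rayEquiv hroot huniq hreach h_norm hy0 hy hyR)

theorem stmt_16 {V : Type*} (E T : V → V → Prop)
    (h_irr : ∀ v : V, ¬ E v v)
    (root : V)
    (h_arb : IsSpanningArborescence E T root)
    (h_norm : IsNormal E T)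
    (R : ℕ → V) (hR : IsSolidRay E R) :
    ∃! r' : ℕ → V,
      (Function.Injective r' ∧ r' 0 = root ∧ (∀ n : ℕ, T (r' n) (r' (n + 1)))) ∧
      RayEquiv E r' R :=
  stmt_16_general E T root h_arb h_norm R hR
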